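/- On ℓ²(M), where M is the free monoid on two generators a, b, the operators R_a and R_b satisfy: R_a*R_a = R_b*R_b = 1, R_a*R_b = R_b*R_a = 0, and R_aR_a* + R_bR_b* = 1 − p_e, where p_e is the rank-one orthogonal projection onto the span of δ_e (e the empty word). Moreover, the C*-subalgebra of B(ℓ²(M)) generated by R_a and R_b contains every compact operator on ℓ²(M). -/

import Mathlib

noncomputable section

/-- The free monoid on two generators `a`, `b`. -/
abbrev M2 : Type := FreeMonoid (Fin 2)

abbrev l2M : Type := lp (fun _ : M2 => ℂ) 2

instance : DecidableEq M2 := Classical.decEq _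

/-- The standard basis vector δ_w of ℓ²(M). -/
def δ (w : M2) : l2M := lp.single 2 w 1

/-!
Right-appending a generator maps basis vectors injectively to basis vectors, so
`R_i* δ_{w j} = [i = j] δ_w` and `R_i* δ_e = 0`; every `δ_w` with `w ≠ e` lies in the range of
exactly one `R_i`, which gives the Cuntz–Toeplitz relations. Hence `p_e = 1 - Σ R_i R_i*` lies in
the *-algebra, and so do all matrix units `|δ_u⟩⟨δ_v|`, obtained from `p_e` by multiplying by
generators on the left and by their adjoints on the right. Their closed span contains every
rank-one operator `|δ_u⟩⟨y|`, hence `P_S K` for the coordinate truncations `P_S`. Since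
`‖P_S‖ ≤ 1` and `P_S → 1` strongly, `P_S K → K` in norm when `K` is compact.
-/

open Filter Topology Metric ContinuousLinearMap InnerProductSpace
open scoped InnerProductSpace

namespace FreeMonoid

variable {α : Type*}

theorem mul_of_ne_one (w : FreeMonoid α) (a : α) : w * of a ≠ 1 := by
  simp [← length_eq_zero]

theorem mul_of_inj {u w : FreeMonoid α} {a b : α} :
    u * of a = w * of b ↔ u = w ∧ a = b := by
  rw [← toList.injective.eq_iff, toList_mul, toList_mul, toList_of, toList_of,
    ← List.concat_eq_append, ← List.concat_eq_append, List.concat_inj, toList.injective.eq_iff]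

@[elab_as_elim]
theorem inductionOn_right {motive : FreeMonoid α → Prop} (w : FreeMonoid α) (one : motive 1)
    (mul_of : ∀ w a, motive w → motive (w * of a)) : motive w :=
  List.reverseRecOn w one fun l a h => mul_of (ofList l) a h

end FreeMonoid

theorem ContinuousLinearMap.tendsto_comp_of_isCompactOperator
    {𝕜 E F ι : Type*} [DenselyNormedField 𝕜] [NormedAddCommGroup E] [NormedSpace 𝕜 E]
    [NormedAddCommGroup F] [NormedSpace 𝕜 F] {l : Filter ι} {P : ι → F →L[𝕜] F} {C : ℝ}
    (hP : ∀ i, ‖P i‖ ≤ C) (hPy : ∀ y, Tendsto (fun i => P i y) l (𝓝 y))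
    {K : E →L[𝕜] F} (hK : IsCompactOperator K) :
    Tendsto (fun i => (P i).comp K) l (𝓝 K) := by
  rw [Metric.tendsto_nhds]
  intro ε hε
  obtain ⟨r, hr, hrε⟩ : ∃ r > 0, (|C| + 2) * r < ε :=
    ⟨ε / (2 * (|C| + 2)), by positivity, by field_simp; linarith⟩
  have htb : TotallyBounded (K '' ball 0 1) :=
    (IsCompactOperator.isCompact_closure_image_ball (𝕜₁ := 𝕜) (f := (K : E →ₗ[𝕜] F)) hK 1
      ).totallyBounded.subset subset_closure
  obtain ⟨t, ht, hcover⟩ := Metric.totallyBounded_iff.1 htb r hr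
  have hnear : ∀ᶠ i in l, ∀ c ∈ t, dist (P i c) c < r :=
    ht.eventually_all.2 fun c _ => Metric.tendsto_nhds.1 (hPy c) r hr
  filter_upwards [hnear] with i hi
  have hball : ∀ x ∈ ball (0 : E) 1, ‖((P i).comp K - K) x‖ ≤ (|C| + 2) * r := by
    intro x hx
    obtain ⟨c, hct, hc⟩ := Set.mem_iUnion₂.1 (hcover (Set.mem_image_of_mem K hx))
    rw [mem_ball, dist_eq_norm] at hc
    have hPc := hi c hct
    rw [dist_eq_norm] at hPc
    have hPKc : ‖P i (K x - c)‖ ≤ |C| * r :=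
      calc ‖P i (K x - c)‖ ≤ ‖P i‖ * ‖K x - c‖ := (P i).le_opNorm _
        _ ≤ |C| * r := mul_le_mul ((hP i).trans (le_abs_self C)) hc.le (norm_nonneg _)
            (abs_nonneg C)
    calc ‖((P i).comp K - K) x‖ = ‖P i (K x - c) + (P i c - c) + (c - K x)‖ := by
          simp only [sub_apply, comp_apply, map_sub]; abel_nf
      _ ≤ ‖P i (K x - c)‖ + ‖P i c - c‖ + ‖c - K x‖ := norm_add₃_le
      _ ≤ (|C| + 2) * r := by rw [norm_sub_rev c]; linarith
  have hnorm : ‖(P i).comp K - K‖ ≤ (|C| + 2) * r := by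
    by_contra! hlt
    obtain ⟨x, hx, hlt'⟩ := ((P i).comp K - K).exists_lt_apply_of_lt_opNorm hlt
    exact (hball x (mem_ball_zero_iff.2 hx)).not_gt hlt'
  rw [dist_eq_norm]
  exact hnorm.trans_lt hrε

theorem inner_δ_left (w : M2) (f : l2M) : ⟪δ w, f⟫_ℂ = f w := by
  simp [δ, lp.inner_single_left]

theorem δ_apply (w v : M2) : (δ w : M2 → ℂ) v = if v = w then 1 else 0 := by
  simp [δ, lp.single_apply, Pi.single_apply]

theorem inner_δ_δ (u v : M2) : ⟪δ u, δ v⟫_ℂ = if u = v then 1 else 0 := by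
  rw [inner_δ_left, δ_apply]

theorem smul_δ (c : ℂ) (w : M2) : c • δ w = lp.single 2 w c := by
  rw [δ, ← lp.single_smul, smul_eq_mul, mul_one]

theorem hasSum_δ (f : l2M) : HasSum (fun w => f w • δ w) f := by
  simpa only [smul_δ] using lp.hasSum_single ENNReal.ofNat_ne_top f

theorem ext_δ {S T : l2M →L[ℂ] l2M} (h : ∀ w, S (δ w) = T (δ w)) : S = T := by
  refine ContinuousLinearMap.ext fun f => ((hasSum_δ f).mapL S).unique ?_
  simpa only [map_smul, h] using (hasSum_δ f).mapL T

theorem adjoint_apply_δ_apply (T : l2M →L[ℂ] l2M) (u v : M2) :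
    (adjoint T (δ v)) u = ⟪T (δ u), δ v⟫_ℂ := by
  rw [← inner_δ_left u, adjoint_inner_right]

def truncation (S : Finset M2) : l2M →L[ℂ] l2M := ∑ w ∈ S, rankOne ℂ (δ w) (δ w)

theorem truncation_apply (S : Finset M2) (x : l2M) :
    truncation S x = ∑ w ∈ S, lp.single 2 w (x w) := by
  simp [truncation, inner_δ_left, smul_δ]

theorem norm_truncation_le (S : Finset M2) : ‖truncation S‖ ≤ 1 := by
  refine opNorm_le_bound _ zero_le_one fun x => ?_
  have h_sum := lp.norm_sum_single (p := 2) (by norm_num) (fun w => x w) S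
  have h_compl := lp.norm_sub_norm_compl_sub_single (p := 2) (by norm_num) x S
  rw [one_mul, truncation_apply,
    ← pow_le_pow_iff_left₀ (norm_nonneg _) (norm_nonneg _) two_ne_zero]
  norm_num at h_sum h_compl ⊢
  linarith [sq_nonneg ‖x - ∑ w ∈ S, lp.single 2 w (x w)‖]

theorem tendsto_truncation (y : l2M) : Tendsto (fun S => truncation S y) atTop (𝓝 y) := by
  simp only [truncation_apply]
  exact lp.hasSum_single ENNReal.ofNat_ne_top y

section Shift

variable {R : Fin 2 → l2M →L[ℂ] l2M} (hR : ∀ i w, R i (δ w) = δ (w * FreeMonoid.of i))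
include hR

theorem adjoint_shift_δ_mul_of (i j : Fin 2) (w : M2) :
    adjoint (R i) (δ (w * FreeMonoid.of j)) = if i = j then δ w else 0 := by
  ext u
  simp only [adjoint_apply_δ_apply, hR, inner_δ_δ, FreeMonoid.mul_of_inj]
  split_ifs with h <;> simp_all [δ_apply]

theorem adjoint_shift_δ_one (i : Fin 2) : adjoint (R i) (δ 1) = 0 := by
  ext u
  rw [adjoint_apply_δ_apply, hR, inner_δ_δ, if_neg (FreeMonoid.mul_of_ne_one u i)]
  rfl

theorem adjoint_shift_mul_shift (i j : Fin 2) :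
    adjoint (R i) * R j = if i = j then 1 else 0 := by
  refine ext_δ fun w => ?_
  rw [mul_apply_eq_comp, hR, adjoint_shift_δ_mul_of hR]
  split_ifs <;> rfl

theorem sum_shift_mul_adjoint_shift :
    ∑ i, R i * adjoint (R i) = 1 - rankOne ℂ (δ 1) (δ 1) := by
  refine ext_δ fun w => ?_
  simp only [sum_apply, mul_apply_eq_comp, sub_apply, one_apply_eq_self,
    rankOne_apply, inner_δ_δ]
  induction w using FreeMonoid.inductionOn_right with
  | one => simp [adjoint_shift_δ_one hR]
  | mul_of w j =>
    simp only [adjoint_shift_δ_mul_of hR, apply_ite, map_zero, hR, Finset.sum_ite_eq',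
      Finset.mem_univ, if_true, if_neg (FreeMonoid.mul_of_ne_one w j).symm, zero_smul, sub_zero]

theorem rankOne_δ_one_one_mem_adjoin :
    rankOne ℂ (δ 1) (δ 1) ∈ StarAlgebra.adjoin ℂ (Set.range R) := by
  rw [← sub_sub_cancel 1 (rankOne ℂ (δ 1) (δ 1)), ← sum_shift_mul_adjoint_shift hR]
  refine sub_mem (one_mem _) (sum_mem fun i _ => ?_)
  have hi : R i ∈ StarAlgebra.adjoin ℂ (Set.range R) := StarAlgebra.subset_adjoin ℂ _ ⟨i, rfl⟩
  simpa only [star_eq_adjoint] using mul_mem hi (star_mem hi)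

theorem rankOne_δ_mem_adjoin (u v : M2) :
    rankOne ℂ (δ u) (δ v) ∈ StarAlgebra.adjoin ℂ (Set.range R) := by
  have hR_mem (i : Fin 2) : R i ∈ StarAlgebra.adjoin ℂ (Set.range R) :=
    StarAlgebra.subset_adjoin ℂ _ ⟨i, rfl⟩
  have h_one (v : M2) : rankOne ℂ (δ 1) (δ v) ∈ StarAlgebra.adjoin ℂ (Set.range R) := by
    induction v using FreeMonoid.inductionOn_right with
    | one => exact rankOne_δ_one_one_mem_adjoin hR
    | mul_of v i ih =>
      rw [← hR, ← adjoint_adjoint (R i), ← rankOne_comp, ← mul_def, ← star_eq_adjoint]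
      exact mul_mem ih (star_mem (hR_mem i))
  induction u using FreeMonoid.inductionOn_right with
  | one => exact h_one v
  | mul_of u i ih =>
    rw [← hR, ← comp_rankOne, ← mul_def]
    exact mul_mem (hR_mem i) ih

theorem rankOne_δ_mem_closure_adjoin (u : M2) (y : l2M) :
    rankOne ℂ (δ u) y ∈ (StarAlgebra.adjoin ℂ (Set.range R)).topologicalClosure := by
  refine (StarSubalgebra.isClosed_topologicalClosure _).mem_of_tendsto
    ((hasSum_δ y).mapL (rankOne ℂ (δ u))) (Eventually.of_forall fun S => sum_mem fun v _ => ?_)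
  rw [map_smulₛₗ]
  exact StarSubalgebra.le_topologicalClosure _
    (SMulMemClass.smul_mem _ (rankOne_δ_mem_adjoin hR u v))

theorem truncation_comp_mem_closure_adjoin (S : Finset M2) (K : l2M →L[ℂ] l2M) :
    (truncation S).comp K ∈ (StarAlgebra.adjoin ℂ (Set.range R)).topologicalClosure := by
  rw [truncation, finsetSum_comp]
  exact sum_mem fun w _ => by rw [rankOne_comp]; exact rankOne_δ_mem_closure_adjoin hR w _

end Shift

open ContinuousLinearMap in
/-- On `ℓ²(M)`, `M` the free monoid on `a`, `b`, the right-append operators satisfy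
`R_a* R_a = R_b* R_b = 1`, `R_a* R_b = R_b* R_a = 0` and
`R_a R_a* + R_b R_b* = 1 − p_e`, with `p_e` the rank-one projection onto the span of
`δ_e`; moreover the C*-subalgebra generated by `R_a, R_b` contains every compact
operator on `ℓ²(M)`. -/
theorem stmt12 (Ra Rb : l2M →L[ℂ] l2M)
    (hRa : ∀ w : M2, Ra (δ w) = δ (w * FreeMonoid.of 0))
    (hRb : ∀ w : M2, Rb (δ w) = δ (w * FreeMonoid.of 1)) :
    adjoint Ra * Ra = 1 ∧ adjoint Rb * Rb = 1 ∧
    adjoint Ra * Rb = 0 ∧ adjoint Rb * Ra = 0 ∧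
    Ra * adjoint Ra + Rb * adjoint Rb = 1 - (innerSL ℂ (δ 1)).smulRight (δ 1) ∧
    ∀ K : l2M →L[ℂ] l2M, IsCompactOperator K →
      K ∈ (StarAlgebra.adjoin ℂ {Ra, Rb}).topologicalClosure := by
  have hR : ∀ i w, ![Ra, Rb] i (δ w) = δ (w * FreeMonoid.of i) := by
    intro i w
    fin_cases i
    exacts [hRa w, hRb w]
  refine ⟨by simpa using adjoint_shift_mul_shift hR 0 0,
    by simpa using adjoint_shift_mul_shift hR 1 1,
    by simpa using adjoint_shift_mul_shift hR 0 1,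
    by simpa using adjoint_shift_mul_shift hR 1 0,
    by simpa [Fin.sum_univ_two, rankOne_def] using sum_shift_mul_adjoint_shift hR,
    fun K hK => ?_⟩
  rw [← Matrix.range_cons_cons_empty Ra Rb ![]]
  exact (StarSubalgebra.isClosed_topologicalClosure _).mem_of_tendsto
    (tendsto_comp_of_isCompactOperator norm_truncation_le tendsto_truncation hK)
    (Eventually.of_forall fun S => truncation_comp_mem_closure_adjoin hR S K)
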